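/- Let G be the graph on vertex set R ⊔ A ⊔ B ⊔ C ⊔ D with |R| = r, A and C inducing K_q, B and D edgeless, and complete joins A–B, B–R, R–D, D–C, C–A, where the subgraph induced on R is any graph X_r. If r ≤ q, then the Hadwiger number of G is at least 2q + r. -/
import Mathlib


/-- `G` has a complete minor of order `m`: there are `m` pairwise disjoint, nonempty,
connected branch sets with an edge of `G` between any two of them. -/
def HasCliqueMinor {V : Type*} (G : SimpleGraph V) (m : ℕ) : Prop :=
  ∃ B : Fin m → Set V,
    (∀ i, (B i).Nonempty) ∧
    (∀ i, (G.induce (B i)).Connected) ∧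
    (Pairwise fun i j => Disjoint (B i) (B j)) ∧
    ∀ i j, i ≠ j → ∃ x ∈ B i, ∃ y ∈ B j, G.Adj x y

/-- The Hadwiger number: the order of the largest complete minor. -/
noncomputable def hadwiger {V : Type*} (G : SimpleGraph V) : ℕ :=
  sSup {m | HasCliqueMinor G m}

/-- The 5-part construction: vertex set `R ⊕ Fin 4 × Fin q`, where parts
`0 = A`, `2 = C` carry `K_q`, parts `1 = B`, `3 = D` are edgeless, `R` carries `X`,
with complete joins `A–B`, `B–R`, `R–D`, `D–C`, `C–A`. -/
def fivePart {R : Type*} (X : SimpleGraph R) (q : ℕ) :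
    SimpleGraph (R ⊕ Fin 4 × Fin q) :=
  SimpleGraph.fromRel (fun u v =>
    match u, v with
    | Sum.inl x, Sum.inl y => X.Adj x y
    | Sum.inl _, Sum.inr (p, _) => p = 1 ∨ p = 3
    | Sum.inr (p, _), Sum.inl _ => p = 1 ∨ p = 3
    | Sum.inr (p, _), Sum.inr (p', _) =>
        (p = p' ∧ (p = 0 ∨ p = 2)) ∨
        (p = 0 ∧ p' = 1) ∨ (p = 2 ∧ p' = 0) ∨ (p = 3 ∧ p' = 2))

section helpers
variable {R : Type*} {X : SimpleGraph R} {q : ℕ}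

lemma adjAA (i j : Fin q) (h : i ≠ j) :
    (fivePart X q).Adj (.inr (0,i)) (.inr (0,j)) := by
  simp [fivePart, SimpleGraph.fromRel_adj, h]

lemma adjCC (i j : Fin q) (h : i ≠ j) :
    (fivePart X q).Adj (.inr (2,i)) (.inr (2,j)) := by
  simp [fivePart, SimpleGraph.fromRel_adj, h]

lemma adjAC (i j : Fin q) :
    (fivePart X q).Adj (.inr (0,i)) (.inr (2,j)) := by
  simp [fivePart, SimpleGraph.fromRel_adj]

lemma adjAB (i j : Fin q) :
    (fivePart X q).Adj (.inr (0,i)) (.inr (1,j)) := by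
  simp [fivePart, SimpleGraph.fromRel_adj]

lemma adjCD (i j : Fin q) :
    (fivePart X q).Adj (.inr (2,i)) (.inr (3,j)) := by
  simp [fivePart, SimpleGraph.fromRel_adj]

lemma adjRB (x : R) (i : Fin q) :
    (fivePart X q).Adj (.inl x) (.inr (1,i)) := by
  simp [fivePart, SimpleGraph.fromRel_adj]

lemma adjRD (x : R) (i : Fin q) :
    (fivePart X q).Adj (.inl x) (.inr (3,i)) := by
  simp [fivePart, SimpleGraph.fromRel_adj]

end helpers

lemma connected_induce_of_center {V : Type*} (G : SimpleGraph V) (s : Set V) (c : V)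
    (hc : c ∈ s) (h : ∀ v ∈ s, v = c ∨ G.Adj c v) : (G.induce s).Connected := by
  rw [SimpleGraph.connected_iff]
  refine ⟨?_, ⟨⟨c, hc⟩⟩⟩
  have key : ∀ v (hv : v ∈ s), (G.induce s).Reachable ⟨c, hc⟩ ⟨v, hv⟩ := by
    intro v hv
    rcases h v hv with rfl | hadj
    · exact SimpleGraph.Reachable.refl _
    · exact SimpleGraph.Adj.reachable (by exact hadj)
  intro a b
  exact (key a a.2).symm.trans (key b b.2)

lemma hasCliqueMinor_le_card {V : Type*} [Fintype V] (G : SimpleGraph V) {m : ℕ}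
    (h : HasCliqueMinor G m) : m ≤ Fintype.card V := by
  obtain ⟨B, h1, _, h3, _⟩ := h
  have hinj : Function.Injective (fun i => (h1 i).choose) := by
    intro i j hij
    simp only at hij
    by_contra hne
    have h1i := (h1 i).choose_spec
    rw [hij] at h1i
    exact Set.disjoint_left.mp (h3 hne) h1i (h1 j).choose_spec
  simpa using Fintype.card_le_of_injective _ hinj

/-- Branch sets for the clique minor. -/
def branchSets {R : Type*} {q r : ℕ} (hrq : r ≤ q) (eR : Fin r → R) :
    (Fin q ⊕ Fin q ⊕ Fin r) → Set (R ⊕ Fin 4 × Fin q)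
  | Sum.inl i => {Sum.inr (0, i)}
  | Sum.inr (Sum.inl i) => {Sum.inr (2, i)}
  | Sum.inr (Sum.inr k) =>
      {Sum.inl (eR k), Sum.inr (1, Fin.castLE hrq k), Sum.inr (3, Fin.castLE hrq k)}

/-- if `r ≤ q` then the Hadwiger number of the 5-part graph is at least `2q + r`. -/
theorem stmt10 {R : Type*} [Fintype R] (X : SimpleGraph R) (q r : ℕ)
    (hr : Fintype.card R = r) (hrq : r ≤ q) :
    2 * q + r ≤ hadwiger (fivePart X q) := by
  have hmem : HasCliqueMinor (fivePart X q) (2 * q + r) := by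
    classical
    have eR : Fin r ≃ R := (Fintype.equivFinOfCardEq hr).symm
    have hcard : Fintype.card (Fin q ⊕ Fin q ⊕ Fin r) = 2 * q + r := by
      simp; ring
    have e : Fin (2 * q + r) ≃ (Fin q ⊕ Fin q ⊕ Fin r) :=
      (Fintype.equivFinOfCardEq hcard).symm
    refine ⟨fun i => branchSets hrq eR (e i), fun i => ?_, fun i => ?_, ?_, ?_⟩ <;> beta_reduce
    · rcases he : e i with a | a | k <;> simp [branchSets]
    · rcases he : e i with a | a | k
      · exact connected_induce_of_center _ _ (Sum.inr (0, a)) rfl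
          (by rintro v rfl; exact Or.inl rfl)
      · exact connected_induce_of_center _ _ (Sum.inr (2, a)) rfl
          (by rintro v rfl; exact Or.inl rfl)
      · refine connected_induce_of_center _ _ (Sum.inl (eR k))
          (by simp [branchSets]) ?_
        rintro v (rfl | rfl | rfl)
        · exact Or.inl rfl
        · exact Or.inr (adjRB _ _)
        · exact Or.inr (adjRD _ _)
    · intro i j hij
      have hij' : e i ≠ e j := fun h => hij (e.injective h)
      have heRi : Function.Injective eR := eR.injective
      have hcst : Function.Injective (Fin.castLE hrq) := Fin.castLE_injective hrq
      rcases he : e i with a | a | a <;> rcases he' : e j with b | b | b <;>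
        simp_all [branchSets, Set.disjoint_left, Fin.castLE_injective,
          Prod.ext_iff]
    · intro i j hij
      have hij' : e i ≠ e j := fun h => hij (e.injective h)
      rcases he : e i with a | a | a <;> rcases he' : e j with b | b | b
      · exact ⟨_, rfl, _, rfl, adjAA a b (by rintro rfl; exact hij (e.injective (he.trans he'.symm)))⟩
      · exact ⟨_, rfl, _, rfl, adjAC a b⟩
      · exact ⟨_, rfl, _, Or.inr (Or.inl rfl), adjAB a _⟩
      · exact ⟨_, rfl, _, rfl, (adjAC b a).symm⟩
      · exact ⟨_, rfl, _, rfl, adjCC a b (by rintro rfl; exact hij (e.injective (he.trans he'.symm)))⟩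
      · exact ⟨_, rfl, _, Or.inr (Or.inr rfl), adjCD a _⟩
      · exact ⟨_, Or.inr (Or.inl rfl), _, rfl, (adjAB b _).symm⟩
      · exact ⟨_, Or.inr (Or.inr rfl), _, rfl, (adjCD b _).symm⟩
      · exact ⟨_, Or.inl rfl, _, Or.inr (Or.inl rfl), adjRB _ _⟩
  exact le_csSup ⟨Fintype.card (R ⊕ Fin 4 × Fin q),
    fun m hm => hasCliqueMinor_le_card _ hm⟩ hmem
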